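/- arXiv:1107.5722 — 3 statements merged into one kernel-verified Lean document; each statement's English description precedes it below -/
import Mathlib

section
/- Narrowing: if Γ, x:T ⊢ P : w and T' ≤ T, then there exists w' ≤ w such that Γ, x:T' ⊢ P : w'. -/
/-- Names are natural numbers. -/
abbrev Name := ℕ

/-- Types: `unit`, `#ᵏT` (`ch`), `iᵏT` (`inp`), `oᵏT` (`out`). -/
inductive Ty : Type
  | unit : Ty
  | ch   : ℕ → Ty → Ty
  | inp  : ℕ → Ty → Ty
  | out  : ℕ → Ty → Ty

/-- Subtyping: least reflexive-transitive relation with the four axioms. -/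
inductive SubT : Ty → Ty → Prop
  | refl (T) : SubT T T
  | trans {T U V} : SubT T U → SubT U V → SubT T V
  | ch_inp (k T) : SubT (.ch k T) (.inp k T)
  | ch_out (k T) : SubT (.ch k T) (.out k T)
  | inp_inp {T S : Ty} {k₁ k₂ : ℕ} : SubT T S → k₁ ≤ k₂ → SubT (.inp k₂ T) (.inp k₁ S)
  | out_out {T S : Ty} {k₁ k₂ : ℕ} : SubT T S → k₁ ≤ k₂ → SubT (.out k₁ S) (.out k₂ T)

/-- Values: the constant `⋆` or a name. -/
inductive Val : Type
  | star : Val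
  | name : Name → Val

/-- Processes of the asynchronous π-calculus. -/
inductive Proc : Type
  | nil    : Proc
  | par    : Proc → Proc → Proc
  | output : Name → Val → Proc          -- a̅⟨v⟩
  | nu     : Name → Proc → Proc         -- (νa)P
  | input  : Name → Name → Proc → Proc  -- a(x).P
  | repl   : Name → Name → Proc → Proc  -- !a(x).P

def Val.fn : Val → Finset Name
  | .star => ∅
  | .name a => {a}

/-- Free names of a process. -/
def Proc.fn : Proc → Finset Name
  | .nil => ∅
  | .par P Q => P.fn ∪ Q.fn
  | .output a v => insert a v.fn
  | .nu a P => P.fn.erase a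
  | .input a x P => insert a (P.fn.erase x)
  | .repl a x P => insert a (P.fn.erase x)

/-- Substitution in subject (channel) position. -/
def subjSubst (a x : Name) (v : Val) : Name :=
  if a = x then (match v with | .star => a | .name b => b) else a

def Val.subst (u : Val) (x : Name) (v : Val) : Val :=
  match u with
  | .star => .star
  | .name b => if b = x then v else .name b

/-- Substitution `P[v/x]` (capture avoidance is guaranteed by the convention
that bound names are pairwise distinct and distinct from free names). -/
def Proc.subst : Proc → Name → Val → Proc
  | .nil, _, _ => .nil
  | .par P Q, x, v => .par (P.subst x v) (Q.subst x v)
  | .output a u, x, v => .output (subjSubst a x v) (u.subst x v)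
  | .nu a P, x, v => if a = x then .nu a P else .nu a (P.subst x v)
  | .input a y P, x, v =>
      .input (subjSubst a x v) y (if y = x then P else P.subst x v)
  | .repl a y P, x, v =>
      .repl (subjSubst a x v) y (if y = x then P else P.subst x v)

/-- Typing environments: partial maps from names to types. -/
abbrev Env := Name → Option Ty

/-- Environment extension `Γ, x:T`. -/
def Env.ext (Γ : Env) (x : Name) (T : Ty) : Env :=
  fun y => if y = x then some T else Γ y

/-- Value typing `Γ ⊢ v : T` (with subsumption). -/
inductive VTy : Env → Val → Ty → Prop
  | star {Γ} : VTy Γ .star .unit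
  | name {Γ a T} : Γ a = some T → VTy Γ (.name a) T
  | sub {Γ a T U} : VTy Γ (.name a) T → SubT T U → VTy Γ (.name a) U

/-- Process typing `Γ ⊢ P : w`. -/
inductive PTy : Env → Proc → ℕ → Prop
  | nil {Γ} : PTy Γ .nil 0
  | output {Γ a v k T} : VTy Γ (.name a) (.out k T) → VTy Γ v T →
      PTy Γ (.output a v) k
  | input {Γ a x P k T w} : VTy Γ (.name a) (.inp k T) →
      PTy (Γ.ext x T) P w → PTy Γ (.input a x P) w
  | repl {Γ a x P k T w} : VTy Γ (.name a) (.inp k T) →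
      PTy (Γ.ext x T) P w → w < k → PTy Γ (.repl a x P) 0
  | nu {Γ a P T w} : PTy (Γ.ext a T) P w → PTy Γ (.nu a P) w
  | par {Γ P₁ P₂ w₁ w₂} : PTy Γ P₁ w₁ → PTy Γ P₂ w₂ →
      PTy Γ (.par P₁ P₂) (max w₁ w₂)

/-- Structural congruence. -/
inductive SC : Proc → Proc → Prop
  | refl (P) : SC P P
  | symm {P Q} : SC P Q → SC Q P
  | trans {P Q R} : SC P Q → SC Q R → SC P R
  | par {P P' Q Q'} : SC P P' → SC Q Q' → SC (.par P Q) (.par P' Q')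
  | nu {a P P'} : SC P P' → SC (.nu a P) (.nu a P')
  | input {a x P P'} : SC P P' → SC (.input a x P) (.input a x P')
  | repl {a x P P'} : SC P P' → SC (.repl a x P) (.repl a x P')
  | alpha_nu {a b P} : b ∉ P.fn → SC (.nu a P) (.nu b (P.subst a (.name b)))
  | alpha_input {a x y P} : y ∉ P.fn →
      SC (.input a x P) (.input a y (P.subst x (.name y)))
  | alpha_repl {a x y P} : y ∉ P.fn →
      SC (.repl a x P) (.repl a y (P.subst x (.name y)))
  | par_assoc (P Q R) : SC (.par P (.par Q R)) (.par (.par P Q) R)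
  | par_comm (P Q) : SC (.par P Q) (.par Q P)
  | par_nil (P) : SC (.par P .nil) P
  | nu_nil (a) : SC (.nu a .nil) .nil
  | nu_nu (a b P) : SC (.nu a (.nu b P)) (.nu b (.nu a P))
  | nu_par {a P Q} : a ∉ P.fn → SC (.nu a (.par P Q)) (.par P (.nu a Q))

/-- Reduction. -/
inductive Red : Proc → Proc → Prop
  | comm {a x P v} : Red (.par (.input a x P) (.output a v)) (P.subst x v)
  | rcomm {a x P v} :
      Red (.par (.repl a x P) (.output a v)) (.par (.repl a x P) (P.subst x v))
  | par {P P' Q} : Red P P' → Red (.par P Q) (.par P' Q)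
  | nu {a P P'} : Red P P' → Red (.nu a P) (.nu a P')
  | struct {P P' Q Q'} : SC Q P → Red P P' → SC P' Q' → Red Q Q'

/-- `P` terminates: no infinite reduction sequence starts from `P`. -/
def Terminates (P : Proc) : Prop :=
  ¬ ∃ f : ℕ → Proc, f 0 = P ∧ ∀ i, Red (f i) (f (i + 1))

/-- Typing derivations, as a `Type`, mirroring `PTy`. -/
inductive Deriv : Env → Proc → ℕ → Type
  | nil {Γ} : Deriv Γ .nil 0
  | output {Γ a v k T} : VTy Γ (.name a) (.out k T) → VTy Γ v T →
      Deriv Γ (.output a v) k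
  | input {Γ a x P k T w} : VTy Γ (.name a) (.inp k T) →
      Deriv (Γ.ext x T) P w → Deriv Γ (.input a x P) w
  | repl {Γ a x P k T w} : VTy Γ (.name a) (.inp k T) →
      Deriv (Γ.ext x T) P w → w < k → Deriv Γ (.repl a x P) 0
  | nu {Γ a P T w} : Deriv (Γ.ext a T) P w → Deriv Γ (.nu a P) w
  | par {Γ P₁ P₂ w₁ w₂} : Deriv Γ P₁ w₁ → Deriv Γ P₂ w₂ →
      Deriv Γ (.par P₁ P₂) (max w₁ w₂)

/-- The level at the root of a type. -/
def Ty.lvl : Ty → ℕ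
  | .unit => 0
  | .ch k _ => k
  | .inp k _ => k
  | .out k _ => k

/-- `lvlΓ(a)`: the level of `a`, read directly from `Γ`. -/
def lvl (Γ : Env) (a : Name) : ℕ := ((Γ a).map Ty.lvl).getD 0

/-- The multiset `⦃D⦄` associated to a derivation. -/
def Deriv.meas : {Γ : Env} → {P : Proc} → {w : ℕ} → Deriv Γ P w → Multiset ℕ
  | Γ, _, _, .output (a := a) _ _ => {lvl Γ a}
  | _, _, _, .nil => 0
  | _, _, _, .input _ D => D.meas
  | _, _, _, .repl _ _ _ => 0
  | _, _, _, .nu D => D.meas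
  | _, _, _, .par D₁ D₂ => D₁.meas + D₂.meas

/-- Multiset order: `MulGT M N` means `M >mul N`. -/
def MulGT (M N : Multiset ℕ) : Prop :=
  M ≠ N ∧ ∀ e₁ ∈ N - M, ∃ e₂ ∈ M - N, e₁ < e₂

/-- `M ≥mul N`. -/
def MulGE (M N : Multiset ℕ) : Prop := MulGT M N ∨ M = N

/-- `IsMeasure Γ P M` : `M` is a measure `osΓ(P)` of `P` w.r.t. `Γ`, i.e. a
minimal multiset (w.r.t. `>mul`) among the `⦃D⦄` for `D` a derivation of
`Γ ⊢ P : w` for some `w`. -/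
def IsMeasure (Γ : Env) (P : Proc) (M : Multiset ℕ) : Prop :=
  (∃ w, ∃ D : Deriv Γ P w, D.meas = M) ∧
  ∀ w, ∀ D : Deriv Γ P w, ¬ MulGT M D.meas

/-- Deng–Sangiorgi value typing: no subtyping, `#`/`Unit` types only. -/
inductive DSV : Env → Val → Ty → Prop
  | star {Γ} : DSV Γ .star .unit
  | name {Γ a T} : Γ a = some T → DSV Γ (.name a) T

/-- The first Deng–Sangiorgi type system `Γ ⊢DS P : w`: the `#` capability
only, the type of the subject read exactly from `Γ`, no subtyping. -/
inductive DSTy : Env → Proc → ℕ → Prop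
  | nil {Γ} : DSTy Γ .nil 0
  | output {Γ a v k T} : Γ a = some (.ch k T) → DSV Γ v T →
      DSTy Γ (.output a v) k
  | input {Γ a x P k T w} : Γ a = some (.ch k T) →
      DSTy (Γ.ext x T) P w → DSTy Γ (.input a x P) w
  | repl {Γ a x P k T w} : Γ a = some (.ch k T) →
      DSTy (Γ.ext x T) P w → w < k → DSTy Γ (.repl a x P) 0
  | nu {Γ a P T w} : DSTy (Γ.ext a T) P w → DSTy Γ (.nu a P) w
  | par {Γ P₁ P₂ w₁ w₂} : DSTy Γ P₁ w₁ → DSTy Γ P₂ w₂ →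
      DSTy Γ (.par P₁ P₂) (max w₁ w₂)

/-- The impure typing judgement `Γ • f:oᵏT ⊢ P : w`, written
`ITy Γ f k T P w`.  The premises written `Γ' • − ⊢ P : w` in the paper are
rendered as: there is a fresh dummy isolated name `d` (not occurring in `P`
nor in the domain of `Γ'`) with `Γ' • d:oᵏ'U ⊢ P : w` for some `k'`, `U`. -/
inductive ITy : Env → Name → ℕ → Ty → Proc → ℕ → Prop
  | frepl {Γ : Env} {f : Name} {k : ℕ} {T : Ty} {x P w d k' U} :
      d ∉ Proc.fn P → (Γ.ext x T) d = none →
      ITy (Γ.ext x T) d k' U P w →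
      w ≤ k →
      ITy Γ f k T (.repl f x P) 0
  | output {Γ : Env} {f k T a v n U} :
      VTy (Γ.ext f (.out k T)) (.name a) (.out n U) →
      VTy (Γ.ext f (.out k T)) v U →
      ITy Γ f k T (.output a v) n
  | iinput {Γ : Env} {f k U c x P n T w d k' V} :
      VTy Γ (.name c) (.inp n T) →
      d ∉ Proc.fn P → ((Γ.ext x T).ext f (.out k U)) d = none →
      ITy ((Γ.ext x T).ext f (.out k U)) d k' V P w →
      w < n →
      ITy Γ f k U (.input c x P) 0
  | irepl {Γ : Env} {f k U c x P n T w d k' V} :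
      VTy Γ (.name c) (.inp n T) →
      d ∉ Proc.fn P → ((Γ.ext x T).ext f (.out k U)) d = none →
      ITy ((Γ.ext x T).ext f (.out k U)) d k' V P w →
      w < n →
      ITy Γ f k U (.repl c x P) 0
  | par {Γ : Env} {f k T P₁ P₂ w₁ w₂} :
      ITy Γ f k T P₁ w₁ → ITy Γ f k T P₂ w₂ →
      ITy Γ f k T (.par P₁ P₂) (max w₁ w₂)
  | fnu {Γ : Env} {g k T f P w n U} :
      ITy (Γ.ext g (.out k T)) f n U P w →
      ITy Γ g k T (.nu f P) w
  | inu {Γ : Env} {f k U c P w n T} :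
      ITy (Γ.ext c (.ch n T)) f k U P w →
      ITy Γ f k U (.nu c P) w

/-- `T` is `Unit` or carries the output capability at its root. -/
def Ty.topO : Ty → Prop
  | .unit => True
  | .out _ _ => True
  | _ => False

/-- Localised types: only output capabilities are transmitted. -/
def Ty.loc : Ty → Prop
  | .unit => True
  | .ch _ T => T.topO ∧ T.loc
  | .inp _ T => T.topO ∧ T.loc
  | .out _ T => T.topO ∧ T.loc

/-- Every type in `Γ` is localised. -/
def LocEnv (Γ : Env) : Prop := ∀ a T, Γ a = some T → T.loc

/-- The localised typing judgement `Γ ⊢Lπ P : w`: a derivation of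
`Γ ⊢ P : w` in which all types occurring are localised. -/
inductive LTy : Env → Proc → ℕ → Prop
  | nil {Γ} : LTy Γ .nil 0
  | output {Γ a v k T} : Ty.loc (.out k T) →
      VTy Γ (.name a) (.out k T) → VTy Γ v T → LTy Γ (.output a v) k
  | input {Γ a x P k T w} : Ty.loc (.inp k T) →
      VTy Γ (.name a) (.inp k T) → LTy (Γ.ext x T) P w →
      LTy Γ (.input a x P) w
  | repl {Γ a x P k T w} : Ty.loc (.inp k T) →
      VTy Γ (.name a) (.inp k T) → LTy (Γ.ext x T) P w → w < k →
      LTy Γ (.repl a x P) 0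
  | nu {Γ a P T w} : T.loc → LTy (Γ.ext a T) P w → LTy Γ (.nu a P) w
  | par {Γ P₁ P₂ w₁ w₂} : LTy Γ P₁ w₁ → LTy Γ P₂ w₂ →
      LTy Γ (.par P₁ P₂) (max w₁ w₂)


/-!
Narrowing holds with `w' = w`: a derivation of `Γ, x:T ⊢ P : w` is rebuilt rule by rule under
`Γ, x:T'`, the only change being that each use of `x : T` read from the environment becomes
`x : T'` followed by subsumption along `T' ≤ T`. Weights only depend on the types of subjects
as they appear in the rules, which subsumption leaves unchanged.
-/

def EnvSub (Γ' Γ : Env) : Prop :=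
  ∀ a S, Γ a = some S → ∃ S', Γ' a = some S' ∧ SubT S' S

lemma EnvSub.refl (Γ : Env) : EnvSub Γ Γ :=
  fun _ S hS => ⟨S, hS, .refl S⟩

lemma EnvSub.ext {Γ' Γ : Env} (h : EnvSub Γ' Γ) (x : Name) {T' T : Ty} (hsub : SubT T' T) :
    EnvSub (Γ'.ext x T') (Γ.ext x T) := by
  intro a S hS
  by_cases hax : a = x
  · simp only [Env.ext, if_pos hax, Option.some.injEq] at hS ⊢
    exact ⟨T', rfl, hS ▸ hsub⟩
  · simp only [Env.ext, if_neg hax] at hS ⊢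
    exact h a S hS

lemma VTy.of_envSub {Γ Γ' : Env} {v : Val} {U : Ty} (h : VTy Γ v U) (hΓ : EnvSub Γ' Γ) :
    VTy Γ' v U := by
  induction h with
  | star => exact .star
  | name ha =>
    obtain ⟨S', hS', hsub⟩ := hΓ _ _ ha
    exact .sub (.name hS') hsub
  | sub _ hsub ih => exact .sub ih hsub

lemma PTy.of_envSub {Γ Γ' : Env} {P : Proc} {w : ℕ} (h : PTy Γ P w) (hΓ : EnvSub Γ' Γ) :
    PTy Γ' P w := by
  induction h generalizing Γ' with
  | nil => exact .nil
  | output ha hv => exact .output (ha.of_envSub hΓ) (hv.of_envSub hΓ)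
  | input ha _ ih => exact .input (ha.of_envSub hΓ) (ih (hΓ.ext _ (.refl _)))
  | repl ha _ hk ih => exact .repl (ha.of_envSub hΓ) (ih (hΓ.ext _ (.refl _))) hk
  | nu _ ih => exact .nu (ih (hΓ.ext _ (.refl _)))
  | par _ _ ih₁ ih₂ => exact .par (ih₁ hΓ) (ih₂ hΓ)

theorem narrowing_general {Γ : Env} {x : Name} {T T' : Ty} {P : Proc} {w : ℕ}
    (h : PTy (Γ.ext x T) P w) (hsub : SubT T' T) :
    ∃ w' ≤ w, PTy (Γ.ext x T') P w' :=
  ⟨w, le_rfl, h.of_envSub ((EnvSub.refl Γ).ext x hsub)⟩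

theorem narrowing {Γ : Env} {x : Name} {T T' : Ty} {P : Proc} {w : ℕ}
    (h : PTy (Γ.ext x T) P w) (hx : Γ x = none) (hsub : SubT T' T) :
    ∃ w' ≤ w, PTy (Γ.ext x T') P w' :=
  narrowing_general h hsub
end

section
/- If Γ ⊢ P : w, then every element k of the measure osΓ(P) satisfies k ≤ w. -/
def Ty.HasOutCap : Ty → Prop
  | .ch _ _ => True
  | .out _ _ => True
  | _ => False

theorem SubT.hasOutCap_and_lvl_le {T U : Ty} (h : SubT T U) (hU : U.HasOutCap) :
    T.HasOutCap ∧ T.lvl ≤ U.lvl := by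
  induction h with
  | refl => exact ⟨hU, le_rfl⟩
  | trans _ _ ih₁ ih₂ =>
    obtain ⟨hV, hle⟩ := ih₂ hU
    exact (ih₁ hV).imp_right (·.trans hle)
  | ch_inp => exact hU.elim
  | ch_out => exact ⟨trivial, le_rfl⟩
  | inp_inp => exact hU.elim
  | out_out _ hk => exact ⟨trivial, hk⟩

theorem VTy.lvl_le {Γ : Env} {a : Name} {U : Ty} (h : VTy Γ (.name a) U)
    (hU : U.HasOutCap) : lvl Γ a ≤ U.lvl := by
  generalize hv : Val.name a = v at h
  induction h with
  | star => exact hU.elim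
  | name hΓ => cases hv; simp [lvl, hΓ]
  | sub _ hTU ih =>
    obtain ⟨hT, hle⟩ := hTU.hasOutCap_and_lvl_le hU
    exact (ih hT hv).trans hle

theorem Deriv.le_of_mem_meas {Γ : Env} {P : Proc} {w : ℕ} (D : Deriv Γ P w) :
    ∀ k ∈ D.meas, k ≤ w := by
  induction D with
  | output ha _ => simpa [Deriv.meas, Ty.lvl] using ha.lvl_le trivial
  | nil | repl => simp [Deriv.meas]
  | input _ _ ih | nu _ ih => exact ih
  | par _ _ ih₁ ih₂ =>
    simp only [Deriv.meas, Multiset.mem_add]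
    rintro k (hk | hk)
    · exact (ih₁ k hk).trans (le_max_left _ _)
    · exact (ih₂ k hk).trans (le_max_right _ _)

theorem PTy.nonempty_deriv {Γ : Env} {P : Proc} {w : ℕ} (h : PTy Γ P w) :
    Nonempty (Deriv Γ P w) := by
  induction h with
  | nil => exact ⟨.nil⟩
  | output ha hv => exact ⟨.output ha hv⟩
  | input ha _ ih => exact ⟨.input ha ih.some⟩
  | repl ha _ hlt ih => exact ⟨.repl ha ih.some hlt⟩
  | nu _ ih => exact ⟨.nu ih.some⟩
  | par _ _ ih₁ ih₂ => exact ⟨.par ih₁.some ih₂.some⟩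

theorem mulGT_of_mem_of_forall_lt {M N : Multiset ℕ} {k : ℕ} (hk : k ∈ M)
    (hN : ∀ e ∈ N, e < k) : MulGT M N := by
  have hkN : k ∉ N := fun h => (hN k h).false
  have hkMN : k ∈ M - N := by
    rw [Multiset.mem_sub, Multiset.count_eq_zero.mpr hkN]
    exact Multiset.count_pos.mpr hk
  refine ⟨fun hMN => hkN (hMN ▸ hk), fun e he => ⟨k, hkMN, hN e ?_⟩⟩
  exact Multiset.mem_of_le (Multiset.sub_le_self _ _) he

theorem measure_le_weight {Γ : Env} {P : Proc} {w : ℕ}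
    (h : PTy Γ P w) :
    ∀ M : Multiset ℕ, IsMeasure Γ P M → ∀ k ∈ M, k ≤ w := by
  intro M hM k hk
  obtain ⟨D⟩ := h.nonempty_deriv
  by_contra! hwk
  exact hM.2 w D <|
    mulGT_of_mem_of_forall_lt hk fun e he => (D.le_of_mem_meas e he).trans_lt hwk
end

section
/- Any process typable according to the first type system of Deng and Sangiorgi is typable in the system with i/o-capabilities and subtyping: if Γ ⊢DS P : w then Γ ⊢ P : w. -/
theorem DSV.toVTy {Γ : Env} {v : Val} {T : Ty} : DSV Γ v T → VTy Γ v T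
  | .star => .star
  | .name h => .name h

theorem VTy.out_of_ch {Γ : Env} {a : Name} {k : ℕ} {T : Ty} (h : Γ a = some (.ch k T)) :
    VTy Γ (.name a) (.out k T) :=
  .sub (.name h) (.ch_out k T)

theorem VTy.inp_of_ch {Γ : Env} {a : Name} {k : ℕ} {T : Ty} (h : Γ a = some (.ch k T)) :
    VTy Γ (.name a) (.inp k T) :=
  .sub (.name h) (.ch_inp k T)

theorem ds_typable_implies_typable {Γ : Env} {P : Proc} {w : ℕ}
    (h : DSTy Γ P w) : PTy Γ P w := by
  induction h with
  | nil => exact .nil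
  | output ha hv => exact .output (.out_of_ch ha) hv.toVTy
  | input ha _ ih => exact .input (.inp_of_ch ha) ih
  | repl ha _ hw ih => exact .repl (.inp_of_ch ha) ih hw
  | nu _ ih => exact .nu ih
  | par _ _ ih₁ ih₂ => exact .par ih₁ ih₂
end
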